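/- arXiv:1904.05451 — 2 statements merged into one kernel-verified Lean document; each statement's English description precedes it below -/
import Mathlib

section
/- Let A be a binary string partitioned as a concatenation A = A₁ ++ A₂, and B a binary string. Then there exists a partition of B into a concatenation B = B₁ ++ B₂ such that LCS(A,B) = LCS(A₁,B₁) + LCS(A₂,B₂). -/
/-
An optimal common subsequence `c` of `A₁ ++ A₂` and `B` splits as `c₁ ++ c₂` with `cᵢ` a
subsequence of `Aᵢ`; embedding `c` into `B` then cuts `B` into `B₁ ++ B₂` with `cᵢ` a subsequence
of `Bᵢ`, so `LCS(A, B) ≤ LCS(A₁, B₁) + LCS(A₂, B₂)`. The reverse inequality holds for every cut of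
`B`, since common subsequences of the two halves concatenate.
-/

/-- Length of the longest common subsequence of two binary strings. -/
def lcsLen (A B : List Bool) : ℕ :=
  ((A.sublists.filter (fun c => decide (c.Sublist B))).map List.length).foldr max 0

theorem length_le_lcsLen {c A B : List Bool} (hA : c.Sublist A) (hB : c.Sublist B) :
    c.length ≤ lcsLen A B :=
  List.le_max_of_le' 0
    (List.mem_map_of_mem (List.mem_filter.2 ⟨List.mem_sublists.2 hA, by simpa⟩)) le_rfl

theorem exists_length_eq_lcsLen (A B : List Bool) :
    ∃ c : List Bool, c.Sublist A ∧ c.Sublist B ∧ c.length = lcsLen A B := by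
  set L := (A.sublists.filter (fun c => decide (c.Sublist B))).map List.length
  have hL : 0 ∈ L := List.mem_map_of_mem (f := List.length) (a := [])
    (List.mem_filter.2 ⟨List.mem_sublists.2 (List.nil_sublist A), by simp⟩)
  have hmax : L.maximum = lcsLen A B := (List.foldr_max_of_ne_nil (List.ne_nil_of_mem hL)).symm
  obtain ⟨c, hc, hlen⟩ := List.mem_map.1 (List.maximum_mem hmax)
  obtain ⟨hcA, hcB⟩ := List.mem_filter.1 hc
  exact ⟨c, List.mem_sublists.1 hcA, by simpa using hcB, hlen⟩

theorem lcsLen_add_le_lcsLen_append (A₁ A₂ B₁ B₂ : List Bool) :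
    lcsLen A₁ B₁ + lcsLen A₂ B₂ ≤ lcsLen (A₁ ++ A₂) (B₁ ++ B₂) := by
  obtain ⟨c₁, hA₁, hB₁, hc₁⟩ := exists_length_eq_lcsLen A₁ B₁
  obtain ⟨c₂, hA₂, hB₂, hc₂⟩ := exists_length_eq_lcsLen A₂ B₂
  rw [← hc₁, ← hc₂, ← List.length_append]
  exact length_le_lcsLen (hA₁.append hA₂) (hB₁.append hB₂)

theorem lcs_split (A₁ A₂ B : List Bool) :
    ∃ B₁ B₂ : List Bool, B = B₁ ++ B₂ ∧
      lcsLen (A₁ ++ A₂) B = lcsLen A₁ B₁ + lcsLen A₂ B₂ := by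
  obtain ⟨c, hcA, hcB, hc⟩ := exists_length_eq_lcsLen (A₁ ++ A₂) B
  obtain ⟨c₁, c₂, rfl, hc₁A, hc₂A⟩ := List.sublist_append_iff.1 hcA
  obtain ⟨B₁, B₂, rfl, hc₁B, hc₂B⟩ := List.append_sublist_iff.1 hcB
  refine ⟨B₁, B₂, rfl, le_antisymm ?_ (lcsLen_add_le_lcsLen_append A₁ A₂ B₁ B₂)⟩
  rw [← hc, List.length_append]
  exact add_le_add (length_le_lcsLen hc₁A hc₁B) (length_le_lcsLen hc₂A hc₂B)
end

section
/- Let A, B be binary strings with 1(A) = 0(B) = α = min{0(A),0(B),1(A),1(B)}. Write A = L_A ++ M_A ++ R_A and B = L_B ++ M_B ++ R_B with |L_A| = |R_A| = |L_B| = |R_B| = α. Suppose 1(R_B) < α/2 − 4β and 0(R_A) ≤ α/2 + 2β for some β > 0. Then LCS(A,B) ≤ 2α − 2β. -/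
theorem lcsLen_le_of_forall {A B : List Bool} {n : ℕ}
    (h : ∀ c : List Bool, c.Sublist A → c.Sublist B → c.length ≤ n) : lcsLen A B ≤ n := by
  refine List.max_le_of_forall_le _ n ?_
  simp only [List.mem_map, List.mem_filter, List.mem_sublists, decide_eq_true_eq]
  rintro _ ⟨c, ⟨hcA, hcB⟩, rfl⟩
  exact h c hcA hcB

theorem lcsLen_append_le (P R Q S : List Bool) (hRS : R.length ≤ S.length) :
    lcsLen (P ++ R) (Q ++ S) ≤ (Q ++ S).count false + P.count true + S.count true := by
  refine lcsLen_le_of_forall fun c hcA hcB => ?_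
  obtain ⟨c₁, c₂, rfl, hc₁P, hc₂R⟩ := List.sublist_append_iff.1 hcA
  obtain ⟨B₁, B₂, hB, hc₁B, hc₂B⟩ := List.append_sublist_iff.1 hcB
  have hc₁ := List.count_false_add_count_true c₁
  have hc₁P₁ := hc₁P.count_le true
  have hc₁B₀ := hc₁B.count_le false
  rcases List.append_eq_append_iff.1 hB with ⟨T, rfl, rfl⟩ | ⟨T, rfl, rfl⟩
  · -- `S = T ++ B₂`
    have hc₂ := List.count_false_add_count_true c₂
    have hc₂B₀ := hc₂B.count_le false
    have hc₂B₁ := hc₂B.count_le true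
    simp only [List.length_append, List.count_append] at *
    omega
  · -- `B₂ = T ++ S`
    have hc₂ := hc₂R.length_le
    have hS := List.count_false_add_count_true S
    simp only [List.length_append, List.count_append] at *
    omega

theorem case_1b_general (A B LA MA RA LB MB RB : List Bool) (α : ℕ) (β : ℝ)
    (h1A : A.count true = α) (h0B : B.count false = α)
    (hA : A = LA ++ MA ++ RA) (hB : B = LB ++ MB ++ RB)
    (hRA : RA.length = α) (hRB : RB.length = α)
    (h1RB : (RB.count true : ℝ) < (α : ℝ) / 2 - 4 * β)
    (h0RA : (RA.count false : ℝ) ≤ (α : ℝ) / 2 + 2 * β) :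
    (lcsLen A B : ℝ) ≤ 2 * (α : ℝ) - 2 * β := by
  have hlcs := lcsLen_append_le (LA ++ MA) RA (LB ++ MB) RB (by rw [hRA, hRB])
  rw [← hA, ← hB, h0B] at hlcs
  have h1P : (LA ++ MA).count true + RA.count true = α := by
    rw [← List.count_append, ← hA, h1A]
  have hRA' : RA.count false + RA.count true = α := by
    rw [List.count_false_add_count_true, hRA]
  have key : lcsLen A B + α ≤ 2 * α + RB.count true + RA.count false := by omega
  have hreal : (lcsLen A B : ℝ) + α ≤ 2 * α + RB.count true + RA.count false := by
    exact_mod_cast key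
  linarith

theorem case_1b (A B LA MA RA LB MB RB : List Bool) (α : ℕ) (β : ℝ) (hβ : 0 < β)
    (h1A : A.count true = α) (h0B : B.count false = α)
    (hmin : α = min (min (A.count false) (B.count false)) (min (A.count true) (B.count true)))
    (hA : A = LA ++ MA ++ RA) (hB : B = LB ++ MB ++ RB)
    (hLA : LA.length = α) (hRA : RA.length = α) (hLB : LB.length = α) (hRB : RB.length = α)
    (h1RB : (RB.count true : ℝ) < (α : ℝ) / 2 - 4 * β)
    (h0RA : (RA.count false : ℝ) ≤ (α : ℝ) / 2 + 2 * β) :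
    (lcsLen A B : ℝ) ≤ 2 * (α : ℝ) - 2 * β :=
  case_1b_general A B LA MA RA LB MB RB α β h1A h0B hA hB hRA hRB h1RB h0RA
end
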